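/- Let s, u : (0,1] → ℝ≥0 be step functions with finitely many pieces, and let s̃ : (0,1] → ℝ≥0 be a nondecreasing step function with finitely many pieces such that ∫₀^{m₀} s̃(x)dx = ∫₀^{m₀} s(x)dx whenever m₀ = 1 or m₀ is a point of discontinuity of s̃. If 4·∫₀^m s(x)dx ≥ ∫₀^m u(x)dx for all m ∈ (0,1], then 4·PF(s̃, m) ≥ PF(u, m) for all m ∈ (0,1], where PF denotes the sorted prefix sum. -/

import Mathlib

/-!
Since `t` is monotone, `PF t m = ∫₀^m t`. The point `m` lies in an interval `(a, b]` on which `t`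
is constant and whose ends are `0`, `1` or jumps of `t`; at `x = a, b` the hypotheses give
`∫₀^x u ≤ 4 ∫₀^x t`, and `∫₀^m t` is the convex combination `(1 - λ) ∫₀^a t + λ ∫₀^b t` with
`λ = (m - a) / (b - a)`. On the side of `u`, the set made of `(0, a]` and of the initial fraction
`λ` of every piece of `u` inside `(a, b]` has length `m`, and `u` integrates over it to the same
convex combination of `∫₀^a u` and `∫₀^b u`.
-/

open MeasureTheory

namespace PD

/-- A step function on `(0,1]` with finitely many pieces: constant on each
interval of some finite partition of `(0,1]` into half-open intervals. -/
def IsStepFun (g : ℝ → ℝ) : Prop :=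
  ∃ (k : ℕ) (t : Fin (k + 1) → ℝ), StrictMono t ∧ t 0 = 0 ∧ t (Fin.last k) = 1 ∧
    ∀ i : Fin k, ∀ x ∈ Set.Ioc (t i.castSucc) (t i.succ),
      ∀ y ∈ Set.Ioc (t i.castSucc) (t i.succ), g x = g y

/-- Sorted `m`-prefix sum of `g` on `(0,1]`: the infimum of `∫_T g` over
(measurable) subsets `T` of `(0,1]` of total length `m`. -/
noncomputable def PF (g : ℝ → ℝ) (m : ℝ) : ℝ :=
  sInf { r : ℝ | ∃ T : Set ℝ, T ⊆ Set.Ioc 0 1 ∧ MeasurableSet T ∧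
    volume T = ENNReal.ofReal m ∧ r = ∫ x in T, g x }

open Set

lemma setIntegral_Ioc_eq_add {g : ℝ → ℝ} {a b c : ℝ} (hab : a ≤ b) (hbc : b ≤ c)
    (hg : IntegrableOn g (Ioc a c)) :
    ∫ x in Ioc a c, g x = (∫ x in Ioc a b, g x) + ∫ x in Ioc b c, g x := by
  rw [← Ioc_union_Ioc_eq_Ioc hab hbc] at hg ⊢
  exact setIntegral_union (Ioc_disjoint_Ioc_of_le le_rfl) measurableSet_Ioc
    hg.left_of_union hg.right_of_union

lemma integrableOn_Ioc_of_forall_eq {g : ℝ → ℝ} {a b v : ℝ} (hv : ∀ x ∈ Ioc a b, g x = v) :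
    IntegrableOn g (Ioc a b) :=
  (integrableOn_const (by simp [Real.volume_Ioc])).congr_fun (fun x hx => (hv x hx).symm)
    measurableSet_Ioc

lemma setIntegral_Ioc_of_forall_eq {g : ℝ → ℝ} {a b v : ℝ} (hab : a ≤ b)
    (hv : ∀ x ∈ Ioc a b, g x = v) : ∫ x in Ioc a b, g x = (b - a) * v := by
  rw [setIntegral_congr_fun measurableSet_Ioc hv, setIntegral_const,
    Real.volume_real_Ioc_of_le hab, smul_eq_mul]

def ConstOnPieces (g : ℝ → ℝ) (c : ℕ → ℝ) (k : ℕ) : Prop :=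
  ∀ i < k, ∃ v, ∀ x ∈ Ioc (c i) (c (i + 1)), g x = v

namespace ConstOnPieces

variable {g : ℝ → ℝ} {c : ℕ → ℝ} {k : ℕ}

lemma apply_eq_right (h : ConstOnPieces g c k) {i : ℕ} (hi : i < k) {x : ℝ}
    (hx : x ∈ Ioc (c i) (c (i + 1))) : g x = g (c (i + 1)) := by
  obtain ⟨v, hv⟩ := h i hi
  rw [hv x hx, hv _ ⟨hx.1.trans_le hx.2, le_rfl⟩]

lemma clamp (h : ConstOnPieces g c k) (a b : ℝ) :
    ConstOnPieces g (fun i => max a (min b (c i))) k := by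
  intro i hi
  obtain ⟨v, hv⟩ := h i hi
  refine ⟨v, fun x hx => hv x ?_⟩
  simp only [mem_Ioc, max_lt_iff, min_lt_iff, le_max_iff, le_min_iff] at hx ⊢
  obtain ⟨⟨hax, hbx | hcx⟩, hxa | ⟨hxb, hxc⟩⟩ := hx <;> first | exact ⟨hcx, hxc⟩ | linarith

lemma integrableOn (h : ConstOnPieces g c k) (hc : Monotone c) :
    IntegrableOn g (Ioc (c 0) (c k)) := by
  induction k with
  | zero => simp
  | succ k ih =>
    obtain ⟨v, hv⟩ := h k k.lt_succ_self
    rw [← Ioc_union_Ioc_eq_Ioc (hc k.zero_le) (hc k.le_succ)]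
    exact (ih fun i hi => h i (by omega)).union (integrableOn_Ioc_of_forall_eq hv)

lemma exists_subset_integral_eq_mul (h : ConstOnPieces g c k) (hc : Monotone c) {lam : ℝ}
    (h0 : 0 ≤ lam) (h1 : lam ≤ 1) :
    ∃ S ⊆ Ioc (c 0) (c k), MeasurableSet S ∧
      volume S = ENNReal.ofReal (lam * (c k - c 0)) ∧
      ∫ x in S, g x = lam * ∫ x in Ioc (c 0) (c k), g x := by
  induction k with
  | zero => exact ⟨∅, empty_subset _, MeasurableSet.empty, by simp, by simp⟩
  | succ k ih =>
    obtain ⟨S, hS, hSm, hSvol, hSint⟩ := ih fun i hi => h i (by omega)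
    obtain ⟨v, hv⟩ := h k k.lt_succ_self
    have h0k : c 0 ≤ c k := hc k.zero_le
    have hkk : c k ≤ c (k + 1) := hc k.le_succ
    have hd : 0 ≤ lam * (c (k + 1) - c k) := mul_nonneg h0 (sub_nonneg.2 hkk)
    have hpiece : Ioc (c k) (c k + lam * (c (k + 1) - c k)) ⊆ Ioc (c k) (c (k + 1)) :=
      Ioc_subset_Ioc_right (by nlinarith)
    have hdisj : Disjoint S (Ioc (c k) (c k + lam * (c (k + 1) - c k))) :=
      (Ioc_disjoint_Ioc_of_le le_rfl).mono hS le_rfl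
    refine ⟨S ∪ Ioc (c k) (c k + lam * (c (k + 1) - c k)),
      union_subset (hS.trans (Ioc_subset_Ioc_right hkk)) (hpiece.trans (Ioc_subset_Ioc_left h0k)),
      hSm.union measurableSet_Ioc, ?_, ?_⟩
    · rw [measure_union hdisj measurableSet_Ioc, hSvol, Real.volume_Ioc,
        ← ENNReal.ofReal_add (mul_nonneg h0 (sub_nonneg.2 h0k)) (by linarith)]
      congr 1
      ring
    · rw [setIntegral_union hdisj measurableSet_Ioc
          (((h.integrableOn hc).mono_set (Ioc_subset_Ioc_right hkk)).mono_set hS)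
          (integrableOn_Ioc_of_forall_eq fun x hx => hv x (hpiece hx)),
        hSint, setIntegral_Ioc_eq_add h0k hkk (h.integrableOn hc),
        setIntegral_Ioc_of_forall_eq (by linarith) fun x hx => hv x (hpiece hx),
        setIntegral_Ioc_of_forall_eq hkk hv]
      ring

end ConstOnPieces

structure IsStepPartition (g : ℝ → ℝ) (k : ℕ) (P : ℕ → ℝ) : Prop where
  monotone : Monotone P
  zero : P 0 = 0
  last : P k = 1
  constOnPieces : ConstOnPieces g P k

lemma IsStepFun.exists_isStepPartition {g : ℝ → ℝ} (hg : IsStepFun g) :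
    ∃ k P, IsStepPartition g k P := by
  obtain ⟨k, p, hp, hp0, hp1, hc⟩ := hg
  refine ⟨k, fun n => p ⟨min n k, by omega⟩, ⟨?_, ?_, ?_, ?_⟩⟩
  · exact fun n m hnm => hp.monotone (Fin.mk_le_mk.2 (min_le_min_right k hnm))
  · rw [← hp0]; congr 1
  · rw [← hp1]; congr 1; ext; simp [Fin.last]
  · intro i hi
    have e1 : (⟨min i k, by omega⟩ : Fin (k + 1)) = (⟨i, hi⟩ : Fin k).castSucc :=
      Fin.ext (min_eq_left hi.le)
    have e2 : (⟨min (i + 1) k, by omega⟩ : Fin (k + 1)) = (⟨i, hi⟩ : Fin k).succ :=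
      Fin.ext (min_eq_left hi)
    refine ⟨g (p (⟨i, hi⟩ : Fin k).succ), fun x hx => ?_⟩
    dsimp only at hx
    rw [e1, e2] at hx
    exact hc ⟨i, hi⟩ x hx _ ⟨hp (by simp [Fin.lt_def]), le_rfl⟩

namespace IsStepPartition

variable {g : ℝ → ℝ} {k : ℕ} {P : ℕ → ℝ} (h : IsStepPartition g k P)
include h

lemma integrableOn : IntegrableOn g (Ioc 0 1) := by
  simpa only [h.zero, h.last] using h.constOnPieces.integrableOn h.monotone

lemma exists_mem_Ioc {x : ℝ} (hx : x ∈ Ioc 0 1) : ∃ i < k, x ∈ Ioc (P i) (P (i + 1)) := by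
  rw [← h.zero, ← h.last, ← h.monotone.biUnion_Ico_Ioc_map_succ] at hx
  simp only [mem_iUnion, mem_Ico, Order.succ_eq_add_one, exists_prop] at hx
  obtain ⟨i, ⟨-, hi⟩, hxi⟩ := hx
  exact ⟨i, hi, hxi⟩

lemma finite_image : (g '' Ioc 0 1).Finite := by
  refine (((finite_Iic k).image P).image g).subset ?_
  rintro _ ⟨x, hx, rfl⟩
  obtain ⟨i, hi, hxi⟩ := h.exists_mem_Ioc hx
  exact ⟨P (i + 1), ⟨i + 1, hi, rfl⟩, (h.constOnPieces.apply_eq_right hi hxi).symm⟩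

lemma continuousWithinAt_Iic {x : ℝ} (hx : x ∈ Ioc 0 1) : ContinuousWithinAt g (Iic x) x := by
  obtain ⟨i, hi, hxi⟩ := h.exists_mem_Ioc hx
  refine continuousWithinAt_const.congr_of_eventuallyEq
    (Filter.mem_of_superset (Ioc_mem_nhdsLE hxi.1) fun y hy => ?_) rfl
  exact (h.constOnPieces.apply_eq_right hi ⟨hy.1, hy.2.trans hxi.2⟩).trans
    (h.constOnPieces.apply_eq_right hi hxi).symm

lemma finite_discontinuities : {x ∈ Ioo (0 : ℝ) 1 | ¬ContinuousAt g x}.Finite := by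
  refine ((finite_Iic k).image P).subset ?_
  rintro x ⟨hx, hdisc⟩
  obtain ⟨i, hi, hxi⟩ := h.exists_mem_Ioc (Ioo_subset_Ioc_self hx)
  refine ⟨i + 1, hi, by_contra fun hne => hdisc ?_⟩
  have hnhds : Ioo (P i) (P (i + 1)) ∈ nhds x := Ioo_mem_nhds hxi.1 (hxi.2.lt_of_ne' hne)
  exact continuousAt_const.congr (Filter.mem_of_superset hnhds fun y hy =>
    (h.constOnPieces.apply_eq_right hi hxi).trans
      (h.constOnPieces.apply_eq_right hi (Ioo_subset_Ioc_self hy)).symm)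

/-- `g` is continuous on `(a, b]`, being left-continuous at `b`, so `g '' (a, b]` is a finite
connected set. -/
lemma exists_forall_eq_of_continuousAt {a b : ℝ} (ha : 0 ≤ a) (hab : a < b) (hb : b ≤ 1)
    (hcont : ∀ x ∈ Ioo a b, ContinuousAt g x) : ∃ v, ∀ x ∈ Ioc a b, g x = v := by
  have hsub : Ioc a b ⊆ Ioc 0 1 := Ioc_subset_Ioc ha hb
  have hcontOn : ContinuousOn g (Ioc a b) := by
    intro x hx
    rcases hx.2.lt_or_eq with hxb | rfl
    · exact (hcont x ⟨hx.1, hxb⟩).continuousWithinAt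
    · exact (h.continuousWithinAt_Iic (hsub hx)).mono fun y hy => hy.2
  have hsingle : (g '' Ioc a b).Subsingleton :=
    h.finite_image.countable.isTotallyDisconnected _ (image_mono hsub)
      (isPreconnected_Ioc.image g hcontOn)
  exact ⟨g b, fun x hx => hsingle (mem_image_of_mem g hx) (mem_image_of_mem g ⟨hab, le_rfl⟩)⟩

lemma exists_flat_Ioc {m : ℝ} (hm : m ∈ Ioc 0 1) :
    ∃ a b, 0 ≤ a ∧ a < m ∧ m ≤ b ∧ b ≤ 1 ∧
      (a = 0 ∨ (a ∈ Ioo 0 1 ∧ ¬ContinuousAt g a)) ∧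
      (b = 1 ∨ (b ∈ Ioo 0 1 ∧ ¬ContinuousAt g b)) ∧ ∃ v, ∀ x ∈ Ioc a b, g x = v := by
  set D := {x ∈ Ioo (0 : ℝ) 1 | ¬ContinuousAt g x}
  have hL : (insert 0 (D ∩ Iio m)).Finite := (h.finite_discontinuities.inter_of_left _).insert 0
  have hR : (insert 1 (D ∩ Ici m)).Finite := (h.finite_discontinuities.inter_of_left _).insert 1
  set a := sSup (insert 0 (D ∩ Iio m))
  set b := sInf (insert 1 (D ∩ Ici m))
  have haL : a ∈ insert 0 (D ∩ Iio m) := (insert_nonempty _ _).csSup_mem hL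
  have hbR : b ∈ insert 1 (D ∩ Ici m) := (insert_nonempty _ _).csInf_mem hR
  have hle_a : ∀ x ∈ insert 0 (D ∩ Iio m), x ≤ a := fun x hx => le_csSup hL.bddAbove hx
  have hb_le : ∀ x ∈ insert 1 (D ∩ Ici m), b ≤ x := fun x hx => csInf_le hR.bddBelow hx
  have h0a : 0 ≤ a := hle_a 0 (mem_insert _ _)
  have hb1 : b ≤ 1 := hb_le 1 (mem_insert _ _)
  have ham : a < m := by
    rcases haL with ha0 | ⟨-, ham⟩
    exacts [ha0 ▸ hm.1, ham]
  have hmb : m ≤ b := by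
    rcases hbR with hb1 | ⟨-, hmb⟩
    exacts [hb1 ▸ hm.2, hmb]
  refine ⟨a, b, h0a, ham, hmb, hb1, haL.imp_right fun ha => ha.1,
    hbR.imp_right fun hb => hb.1,
    h.exists_forall_eq_of_continuousAt h0a (ham.trans_le hmb) hb1 fun x hx => ?_⟩
  by_contra hdisc
  have hxD : x ∈ D := ⟨⟨h0a.trans_lt hx.1, hx.2.trans_le hb1⟩, hdisc⟩
  rcases lt_or_ge x m with hxm | hxm
  · exact (hle_a x (Or.inr ⟨hxD, hxm⟩)).not_gt hx.1
  · exact (hb_le x (Or.inr ⟨hxD, hxm⟩)).not_gt hx.2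

lemma exists_subset_integral_eq {a b p q : ℝ} (ha : 0 ≤ a) (hab : a ≤ b) (hb : b ≤ 1)
    (hp : 0 ≤ p) (hq : 0 ≤ q) (hpq : p + q = 1) :
    ∃ S ⊆ Ioc 0 1, MeasurableSet S ∧ volume S = ENNReal.ofReal (p * a + q * b) ∧
      ∫ x in S, g x = p * (∫ x in Ioc 0 a, g x) + q * ∫ x in Ioc 0 b, g x := by
  obtain rfl : p = 1 - q := eq_sub_of_add_eq hpq
  set c : ℕ → ℝ := fun i => max a (min b (P i))
  have hc : Monotone c := fun i j hij => max_le_max le_rfl (min_le_min le_rfl (h.monotone hij))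
  have hc0 : c 0 = a := by simp [c, h.zero, ha, hab.trans' ha]
  have hck : c k = b := by simp [c, h.last, hb, hab]
  have hcp : ConstOnPieces g c k := h.constOnPieces.clamp a b
  obtain ⟨S, hS, hSm, hSvol, hSint⟩ := hcp.exists_subset_integral_eq_mul hc hq (by linarith)
  rw [hc0, hck] at hS hSvol hSint
  have hdisj : Disjoint (Ioc 0 a) S := (Ioc_disjoint_Ioc_of_le le_rfl).mono_right hS
  have hb' : Ioc 0 b ⊆ Ioc 0 1 := Ioc_subset_Ioc_right hb
  have ha' : Ioc 0 a ⊆ Ioc 0 1 := (Ioc_subset_Ioc_right hab).trans hb'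
  have hS' : S ⊆ Ioc 0 1 := hS.trans (Ioc_subset_Ioc ha hb)
  refine ⟨Ioc 0 a ∪ S, union_subset ha' hS', measurableSet_Ioc.union hSm, ?_, ?_⟩
  · rw [measure_union hdisj hSm, hSvol, Real.volume_Ioc, sub_zero,
      ← ENNReal.ofReal_add ha (mul_nonneg hq (sub_nonneg.2 hab))]
    congr 1
    ring
  · rw [setIntegral_union hdisj hSm (h.integrableOn.mono_set ha') (h.integrableOn.mono_set hS'),
      hSint, setIntegral_Ioc_eq_add ha hab (h.integrableOn.mono_set hb')]
    ring

end IsStepPartition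

lemma PF_le_setIntegral {g : ℝ → ℝ} (hg0 : ∀ x ∈ Ioc (0 : ℝ) 1, 0 ≤ g x) {m : ℝ} {S : Set ℝ}
    (hS : S ⊆ Ioc 0 1) (hSm : MeasurableSet S) (hvol : volume S = ENNReal.ofReal m) :
    PF g m ≤ ∫ x in S, g x :=
  csInf_le ⟨0, by
    rintro _ ⟨T, hT, hTm, -, rfl⟩
    exact setIntegral_nonneg hTm fun x hx => hg0 x (hT hx)⟩ ⟨S, hS, hSm, hvol, rfl⟩

lemma setIntegral_le_setIntegral_of_le_of_le {α : Type*} [MeasurableSpace α] {μ : Measure α}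
    {g : α → ℝ} {X Y : Set α} {c : ℝ} (hX : MeasurableSet X) (hY : MeasurableSet Y)
    (hvol : μ X = μ Y) (hfin : μ Y ≠ ⊤) (hgX : IntegrableOn g X μ) (hgY : IntegrableOn g Y μ)
    (hXc : ∀ x ∈ X, g x ≤ c) (hYc : ∀ y ∈ Y, c ≤ g y) :
    ∫ x in X, g x ∂μ ≤ ∫ y in Y, g y ∂μ :=
  calc ∫ x in X, g x ∂μ ≤ ∫ _ in X, c ∂μ :=
        setIntegral_mono_on hgX (integrableOn_const (hvol ▸ hfin)) hX hXc
    _ = ∫ _ in Y, c ∂μ := by simp only [setIntegral_const, measureReal_def, hvol]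
    _ ≤ ∫ y in Y, g y ∂μ := setIntegral_mono_on (integrableOn_const hfin) hgY hY hYc

/-- Exchanging `(0, m] \ T` for `T \ (0, m]`, of the same length, trades values `≤ g m` for
values `≥ g m`. -/
lemma setIntegral_Ioc_le_of_monotoneOn {g : ℝ → ℝ} (hg : IntegrableOn g (Ioc 0 1))
    (hmono : MonotoneOn g (Ioc 0 1)) {m : ℝ} (hm : m ∈ Ioc 0 1) {T : Set ℝ}
    (hT : T ⊆ Ioc 0 1) (hTm : MeasurableSet T) (hvol : volume T = ENNReal.ofReal m) :
    ∫ x in Ioc 0 m, g x ≤ ∫ x in T, g x := by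
  set A := Ioc (0 : ℝ) m
  have hA : A ⊆ Ioc 0 1 := Ioc_subset_Ioc_right hm.2
  have hAT : volume A = volume T := by rw [hvol, Real.volume_Ioc, sub_zero]
  have hfin : volume (A ∩ T) ≠ ⊤ :=
    ne_top_of_le_ne_top (hAT ▸ hvol ▸ ENNReal.ofReal_ne_top) (measure_mono inter_subset_left)
  have hdiff : volume (A \ T) = volume (T \ A) := by
    have hA' := measure_inter_add_sdiff (μ := volume) A hTm
    have hT' := measure_inter_add_sdiff (μ := volume) T (measurableSet_Ioc : MeasurableSet A)
    rw [inter_comm, ← hAT, ← hA'] at hT'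
    exact ((ENNReal.add_right_inj hfin).1 hT').symm
  have hswap : ∫ x in A \ T, g x ≤ ∫ x in T \ A, g x :=
    setIntegral_le_setIntegral_of_le_of_le (c := g m) (measurableSet_Ioc.diff hTm)
      (hTm.diff measurableSet_Ioc) hdiff
      (ne_top_of_le_ne_top (hvol ▸ ENNReal.ofReal_ne_top) (measure_mono sdiff_subset))
      (hg.mono_set (sdiff_subset.trans hA)) (hg.mono_set (sdiff_subset.trans hT))
      (fun x hx => hmono (hA hx.1) hm hx.1.2)
      (fun x hx => hmono hm (hT hx.1) (not_le.1 fun hxm => hx.2 ⟨(hT hx.1).1, hxm⟩).le)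
  calc ∫ x in A, g x = (∫ x in A ∩ T, g x) + ∫ x in A \ T, g x :=
        (integral_inter_add_sdiff hTm (hg.mono_set hA)).symm
    _ ≤ (∫ x in T ∩ A, g x) + ∫ x in T \ A, g x := by rw [inter_comm]; linarith
    _ = ∫ x in T, g x := integral_inter_add_sdiff measurableSet_Ioc (hg.mono_set hT)

lemma PF_eq_setIntegral_of_monotoneOn {g : ℝ → ℝ} (hg : IntegrableOn g (Ioc 0 1))
    (hmono : MonotoneOn g (Ioc 0 1)) {m : ℝ} (hm : m ∈ Ioc 0 1) :
    PF g m = ∫ x in Ioc 0 m, g x :=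
  IsLeast.csInf_eq
    ⟨⟨Ioc 0 m, Ioc_subset_Ioc_right hm.2, measurableSet_Ioc, by rw [Real.volume_Ioc, sub_zero],
      rfl⟩, by
      rintro _ ⟨T, hT, hTm, hvol, rfl⟩
      exact setIntegral_Ioc_le_of_monotoneOn hg hmono hm hT hTm hvol⟩

lemma setIntegral_Ioc_zero_convex_comb_of_forall_eq {g : ℝ → ℝ} (hg : IntegrableOn g (Ioc 0 1))
    {a b v p q : ℝ} (ha : 0 ≤ a) (hab : a ≤ b) (hb : b ≤ 1) (hp : 0 ≤ p) (hq : 0 ≤ q)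
    (hpq : p + q = 1) (hv : ∀ x ∈ Ioc a b, g x = v) :
    ∫ x in Ioc 0 (p * a + q * b), g x = p * (∫ x in Ioc 0 a, g x) + q * ∫ x in Ioc 0 b, g x := by
  obtain rfl : p = 1 - q := eq_sub_of_add_eq hpq
  have hprefix : ∀ x, a ≤ x → x ≤ b → ∫ y in Ioc 0 x, g y = (∫ y in Ioc 0 a, g y) + (x - a) * v :=
    fun x hax hxb => by
      rw [setIntegral_Ioc_eq_add ha hax (hg.mono_set (Ioc_subset_Ioc_right (hxb.trans hb))),
        setIntegral_Ioc_of_forall_eq hax fun y hy => hv y ⟨hy.1, hy.2.trans hxb⟩]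
  rw [hprefix _ (by nlinarith) (by nlinarith), hprefix b hab le_rfl]
  ring

theorem stmt14_general (s u t : ℝ → ℝ)
    (hu : IsStepFun u) (ht : IsStepFun t)
    (hu0 : ∀ x ∈ Set.Ioc (0 : ℝ) 1, 0 ≤ u x)
    (hmono : MonotoneOn t (Set.Ioc (0 : ℝ) 1))
    (hpres : ∀ m₀ : ℝ, (m₀ = 1 ∨ (m₀ ∈ Set.Ioo (0 : ℝ) 1 ∧ ¬ ContinuousAt t m₀)) →
      (∫ x in Set.Ioc (0 : ℝ) m₀, t x) = ∫ x in Set.Ioc (0 : ℝ) m₀, s x)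
    (h4 : ∀ m ∈ Set.Ioc (0 : ℝ) 1,
      (∫ x in Set.Ioc (0 : ℝ) m, u x) ≤ 4 * ∫ x in Set.Ioc (0 : ℝ) m, s x) :
    ∀ m ∈ Set.Ioc (0 : ℝ) 1, PF u m ≤ 4 * PF t m := by
  intro m hm
  obtain ⟨ku, Pu, hU⟩ := hu.exists_isStepPartition
  obtain ⟨kt, Pt, hT⟩ := ht.exists_isStepPartition
  obtain ⟨a, b, h0a, ham, hmb, hb1, ha, hb, v, hv⟩ := hT.exists_flat_Ioc hm
  have hend : ∀ x ∈ Ioc (0 : ℝ) 1, (x = 1 ∨ (x ∈ Ioo 0 1 ∧ ¬ContinuousAt t x)) →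
      ∫ y in Ioc 0 x, u y ≤ 4 * ∫ y in Ioc 0 x, t y := fun x hx hx' => by
    rw [hpres x hx']; exact h4 x hx
  have hua : ∫ y in Ioc 0 a, u y ≤ 4 * ∫ y in Ioc 0 a, t y := by
    rcases ha with rfl | ha
    · simp
    · exact hend a (Ioo_subset_Ioc_self ha.1) (Or.inr ha)
  have hub := hend b ⟨hm.1.trans_le hmb, hb1⟩ hb
  obtain ⟨p, q, hp, hq, hpq, rfl⟩ := Icc_subset_segment (𝕜 := ℝ) ⟨ham.le, hmb⟩
  simp only [smul_eq_mul] at hm ⊢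
  have hab := (ham.trans_le hmb).le
  obtain ⟨S, hS, hSm, hSvol, hSint⟩ := hU.exists_subset_integral_eq h0a hab hb1 hp hq hpq
  calc PF u (p * a + q * b) ≤ ∫ y in S, u y := PF_le_setIntegral hu0 hS hSm hSvol
    _ = p * (∫ y in Ioc 0 a, u y) + q * ∫ y in Ioc 0 b, u y := hSint
    _ ≤ 4 * (p * (∫ y in Ioc 0 a, t y) + q * ∫ y in Ioc 0 b, t y) := by
      linarith [mul_le_mul_of_nonneg_left hua hp, mul_le_mul_of_nonneg_left hub hq]
    _ = 4 * PF t (p * a + q * b) := by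
      rw [PF_eq_setIntegral_of_monotoneOn hT.integrableOn hmono hm,
        setIntegral_Ioc_zero_convex_comb_of_forall_eq hT.integrableOn h0a hab hb1 hp hq hpq hv]

theorem stmt14 (s u t : ℝ → ℝ)
    (hs : IsStepFun s) (hu : IsStepFun u) (ht : IsStepFun t)
    (hs0 : ∀ x ∈ Set.Ioc (0 : ℝ) 1, 0 ≤ s x)
    (hu0 : ∀ x ∈ Set.Ioc (0 : ℝ) 1, 0 ≤ u x)
    (ht0 : ∀ x ∈ Set.Ioc (0 : ℝ) 1, 0 ≤ t x)
    (hmono : MonotoneOn t (Set.Ioc (0 : ℝ) 1))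
    (hpres : ∀ m₀ : ℝ, (m₀ = 1 ∨ (m₀ ∈ Set.Ioo (0 : ℝ) 1 ∧ ¬ ContinuousAt t m₀)) →
      (∫ x in Set.Ioc (0 : ℝ) m₀, t x) = ∫ x in Set.Ioc (0 : ℝ) m₀, s x)
    (h4 : ∀ m ∈ Set.Ioc (0 : ℝ) 1,
      (∫ x in Set.Ioc (0 : ℝ) m, u x) ≤ 4 * ∫ x in Set.Ioc (0 : ℝ) m, s x) :
    ∀ m ∈ Set.Ioc (0 : ℝ) 1, PF u m ≤ 4 * PF t m :=
  stmt14_general s u t hu ht hu0 hmono hpres h4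

end PD
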